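/- arXiv:1412.4320 — 5 statements merged into one kernel-verified Lean document; each statement's English description precedes it below -/
import Mathlib

section
/- The delta rule for the for-comprehension (bind) is correct: let e₁, Δe₁ be bags over A and let e₂, Δe₂ : A → Bag(B) be functions such that for all x, e₂'(x) = e₂(x) ⊎ Δe₂(x). Then bind(e₁ ⊎ Δe₁, e₂') = bind(e₁, e₂) ⊎ (bind(e₁, Δe₂) ⊎ bind(Δe₁, e₂) ⊎ bind(Δe₁, Δe₂)), where bind(X, f)(b) = Σ_{a} X(a) · f(a)(b). -/
/-- The for-comprehension (bind): `bind(X, f)(b) = Σ_a X(a) · f(a)(b)`. -/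
noncomputable def bagBind {A B : Type*} (X : A →₀ ℤ) (f : A → (B →₀ ℤ)) : B →₀ ℤ :=
  X.sum fun a m => m • f a

/-- Correctness of the delta rule for the for-comprehension. -/
theorem delta_bind_correct {A B : Type*} (e₁ Δe₁ : A →₀ ℤ)
    (e₂ Δe₂ e₂' : A → (B →₀ ℤ)) (h : ∀ x, e₂' x = e₂ x + Δe₂ x) :
    bagBind (e₁ + Δe₁) e₂' =
      bagBind e₁ e₂ + (bagBind e₁ Δe₂ + bagBind Δe₁ e₂ + bagBind Δe₁ Δe₂) := by
  simp only [bagBind, h, smul_add]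
  rw [Finsupp.sum_add_index' (by simp) (by intros; simp [add_smul]; abel)]
  simp only [Finsupp.sum_add]
  abel
end

section
/- If an IncNRC+ expression h is input-independent (the relation symbol R does not occur in h), then its semantic delta is the empty bag: for all values of R and ΔR, the denotation of δ(h) equals the zero bag, equivalently ⟦h⟧(R ⊎ ΔR) = ⟦h⟧(R). -/
/-- Nested relational types. -/
inductive Ty : Type where
  | base : Ty
  | prod (t₁ t₂ : Ty) : Ty
  | bag (t : Ty) : Ty

/-- Denotation of types; `bag t` denotes bags, i.e. finitely supported
functions into `ℤ`. -/
def Ty.denote : Ty → Type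
  | .base => ℕ
  | .prod t₁ t₂ => t₁.denote × t₂.denote
  | .bag t => t.denote →₀ ℤ

/-- Bag Cartesian product: `(X × Y)(a,b) = X(a) · Y(b)`. -/
noncomputable def bagProd {A B : Type*} (X : A →₀ ℤ) (Y : B →₀ ℤ) : A × B →₀ ℤ :=
  Finsupp.onFinset (X.support ×ˢ Y.support) (fun p => X p.1 * Y p.2)
    (fun p hp => Finset.mem_product.mpr
      ⟨Finsupp.mem_support_iff.mpr (left_ne_zero_of_mul hp),
       Finsupp.mem_support_iff.mpr (right_ne_zero_of_mul hp)⟩)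

/-- Flatten: `flatten(X)(b) = Σ_v X(v) · v(b)`. -/
noncomputable def bagFlatten {B : Type*} (X : (B →₀ ℤ) →₀ ℤ) : B →₀ ℤ :=
  X.sum fun v m => m • v

/-- IncNRC⁺ expressions of bag type `Bag t`, over a single input relation of
bag type `Bag tA` (`rel`) and its update (`deltaRel`).  Input-independent
atoms are constant bags; the for-comprehension binds a variable of the
element type of its source. -/
inductive Expr (tA : Ty) : Ty → Type where
  | rel : Expr tA tA
  | deltaRel : Expr tA tA
  | empty : ∀ {t}, Expr tA t
  | atom : ∀ {t}, (Ty.denote t →₀ ℤ) → Expr tA t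
  | union : ∀ {t}, Expr tA t → Expr tA t → Expr tA t
  | prod : ∀ {t₁ t₂}, Expr tA t₁ → Expr tA t₂ → Expr tA (.prod t₁ t₂)
  | forC : ∀ {t₁ t₂}, Expr tA t₁ → (Ty.denote t₁ → Expr tA t₂) → Expr tA t₂
  | flatten : ∀ {t}, Expr tA (.bag t) → Expr tA t
  | neg : ∀ {t}, Expr tA t → Expr tA t

/-- Denotational semantics: an expression denotes a bag, given the input
relation `R` and the update `ΔR`. -/
noncomputable def Expr.denote {tA : Ty} (R ΔR : Ty.denote tA →₀ ℤ) :
    ∀ {t : Ty}, Expr tA t → (Ty.denote t →₀ ℤ)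
  | _, .rel => R
  | _, .deltaRel => ΔR
  | _, .empty => 0
  | _, .atom v => v
  | _, .union e₁ e₂ => Expr.denote R ΔR e₁ + Expr.denote R ΔR e₂
  | _, .prod e₁ e₂ => bagProd (Expr.denote R ΔR e₁) (Expr.denote R ΔR e₂)
  | _, .forC e₁ f => bagBind (Expr.denote R ΔR e₁) fun x => Expr.denote R ΔR (f x)
  | _, .flatten e => bagFlatten (Expr.denote R ΔR e)
  | _, .neg e => -Expr.denote R ΔR e
termination_by structural _ e => e

/-- The syntactic delta transformation. -/
def Expr.delta {tA : Ty} : ∀ {t : Ty}, Expr tA t → Expr tA t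
  | _, .rel => .deltaRel
  | _, .deltaRel => .empty
  | _, .empty => .empty
  | _, .atom _ => .empty
  | _, .union e₁ e₂ => .union (Expr.delta e₁) (Expr.delta e₂)
  | _, .prod e₁ e₂ =>
      .union (.union (.prod (Expr.delta e₁) e₂) (.prod e₁ (Expr.delta e₂)))
        (.prod (Expr.delta e₁) (Expr.delta e₂))
  | _, .forC e₁ f =>
      .union (.union (.forC (Expr.delta e₁) f) (.forC e₁ fun x => Expr.delta (f x)))
        (.forC (Expr.delta e₁) fun x => Expr.delta (f x))
  | _, .flatten e => .flatten (Expr.delta e)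
  | _, .neg e => .neg (Expr.delta e)

/-- An expression is input-independent iff the relation symbol `R` (`rel`)
does not occur in it. -/
def Expr.InputIndep {tA : Ty} : ∀ {t : Ty}, Expr tA t → Prop
  | _, .rel => False
  | _, .deltaRel => True
  | _, .empty => True
  | _, .atom _ => True
  | _, .union e₁ e₂ => Expr.InputIndep e₁ ∧ Expr.InputIndep e₂
  | _, .prod e₁ e₂ => Expr.InputIndep e₁ ∧ Expr.InputIndep e₂
  | _, .forC e₁ f => Expr.InputIndep e₁ ∧ ∀ x, Expr.InputIndep (f x)
  | _, .flatten e => Expr.InputIndep e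
  | _, .neg e => Expr.InputIndep e

section BagZero

variable {A B : Type*}

@[simp]
lemma bagProd_zero_left (Y : B →₀ ℤ) : bagProd (0 : A →₀ ℤ) Y = 0 := by
  ext; simp [bagProd]

@[simp]
lemma bagProd_zero_right (X : A →₀ ℤ) : bagProd X (0 : B →₀ ℤ) = 0 := by
  ext; simp [bagProd]

@[simp]
lemma bagBind_zero_left (f : A → (B →₀ ℤ)) : bagBind 0 f = 0 := by
  simp [bagBind]

@[simp]
lemma bagBind_zero_right (X : A →₀ ℤ) : bagBind X (fun _ => (0 : B →₀ ℤ)) = 0 := by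
  simp [bagBind]

@[simp]
lemma bagFlatten_zero : bagFlatten (0 : (B →₀ ℤ) →₀ ℤ) = 0 := by
  simp [bagFlatten]

end BagZero

namespace Expr

variable {tA : Ty}

theorem denote_delta_eq_zero_of_inputIndep {t : Ty} {h : Expr tA t} (hI : h.InputIndep)
    (R ΔR : Ty.denote tA →₀ ℤ) : denote R ΔR h.delta = 0 := by
  induction h with
  | rel => exact hI.elim
  | deltaRel | empty | atom _ => rfl
  | union e₁ e₂ ih₁ ih₂ => simp [delta, denote, ih₁ hI.1, ih₂ hI.2]
  | prod e₁ e₂ ih₁ ih₂ =>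
    simp only [delta, denote, ih₁ hI.1, ih₂ hI.2, bagProd_zero_left, bagProd_zero_right]
    -- the sum lives over `Ty.denote (.prod _ _)`, which `simp` does not unfold to a product type
    exact (add_zero _).trans (add_zero _)
  | forC e₁ f ih₁ ihf =>
    have hf : (fun x => denote R ΔR (f x).delta) = fun _ => 0 :=
      funext fun x => ihf x (hI.2 x)
    simp [delta, denote, ih₁ hI.1, hf]
  | flatten e ih => exact (congrArg bagFlatten (ih hI)).trans bagFlatten_zero
  | neg e ih => simp [delta, denote, ih hI]

theorem denote_eq_of_inputIndep {t : Ty} {h : Expr tA t} (hI : h.InputIndep)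
    (R₁ R₂ D : Ty.denote tA →₀ ℤ) : denote R₁ D h = denote R₂ D h := by
  induction h with
  | rel => exact hI.elim
  | deltaRel | empty | atom _ => rfl
  | union e₁ e₂ ih₁ ih₂ => exact congrArg₂ (· + ·) (ih₁ hI.1) (ih₂ hI.2)
  | prod e₁ e₂ ih₁ ih₂ => exact congrArg₂ bagProd (ih₁ hI.1) (ih₂ hI.2)
  | forC e₁ f ih₁ ihf => exact congrArg₂ bagBind (ih₁ hI.1) (funext fun x => ihf x (hI.2 x))
  | flatten e ih => exact congrArg bagFlatten (ih hI)
  | neg e ih => exact congrArg Neg.neg (ih hI)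

end Expr

/-- if `h` is input-independent then its semantic delta is the
empty bag; equivalently `⟦h⟧(R ⊎ ΔR) = ⟦h⟧(R)`. -/
theorem delta_inputIndep {tA t : Ty} (h : Expr tA t) (hI : Expr.InputIndep h) :
    ∀ R ΔR D : Ty.denote tA →₀ ℤ,
      Expr.denote R ΔR (Expr.delta h) = 0 ∧
      Expr.denote (R + ΔR) D h = Expr.denote R D h :=
  fun R ΔR D =>
    ⟨Expr.denote_delta_eq_zero_of_inputIndep hI R ΔR, Expr.denote_eq_of_inputIndep hI _ R D⟩
end

section
/- Correctness of the delta transformation for IncNRC+: for every expression h built from R, ∅, input-independent atoms, ⊎, ×, for-comprehension, flatten, and ⊖, and for all bags R and ΔR, ⟦h⟧(R ⊎ ΔR) = ⟦h⟧(R) ⊎ ⟦δ(h)⟧(R, ΔR). -/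
/-! Product and bind are bilinear, flatten and negation are linear, so expanding
`⟦h⟧(R ⊎ ΔR)` with the induction hypotheses yields `⟦h⟧(R)` plus exactly the
cross terms that `δ` collects. -/

theorem bagProd_apply {A B : Type*} (X : A →₀ ℤ) (Y : B →₀ ℤ) (p : A × B) :
    bagProd X Y p = X p.1 * Y p.2 := rfl

theorem bagProd_add_left {A B : Type*} (X X' : A →₀ ℤ) (Y : B →₀ ℤ) :
    bagProd (X + X') Y = bagProd X Y + bagProd X' Y := by
  ext p; simp only [bagProd_apply, Finsupp.add_apply, add_mul]

theorem bagProd_add_right {A B : Type*} (X : A →₀ ℤ) (Y Y' : B →₀ ℤ) :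
    bagProd X (Y + Y') = bagProd X Y + bagProd X Y' := by
  ext p; simp only [bagProd_apply, Finsupp.add_apply, mul_add]

theorem bagBind_add_left {A B : Type*} (X X' : A →₀ ℤ) (f : A → (B →₀ ℤ)) :
    bagBind (X + X') f = bagBind X f + bagBind X' f :=
  Finsupp.sum_add_index' (fun _ => zero_smul ℤ _) (fun _ _ _ => add_smul _ _ _)

theorem bagBind_add_right {A B : Type*} (X : A →₀ ℤ) (f g : A → (B →₀ ℤ)) :
    bagBind X (fun a => f a + g a) = bagBind X f + bagBind X g := by
  rw [bagBind, bagBind, bagBind, ← Finsupp.sum_add]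
  exact Finsupp.sum_congr fun _ _ => smul_add _ _ _

theorem bagFlatten_add {B : Type*} (X X' : (B →₀ ℤ) →₀ ℤ) :
    bagFlatten (X + X') = bagFlatten X + bagFlatten X' :=
  Finsupp.sum_add_index' (fun _ => zero_smul ℤ _) (fun _ _ _ => add_smul _ _ _)

/-- Correctness of the delta transformation for IncNRC⁺:
`⟦h⟧(R ⊎ ΔR) = ⟦h⟧(R) ⊎ ⟦δ(h)⟧(R, ΔR)`. -/
theorem delta_correct {tA t : Ty} (h : Expr tA t) (R ΔR : Ty.denote tA →₀ ℤ) :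
    Expr.denote (R + ΔR) ΔR h = Expr.denote R ΔR h + Expr.denote R ΔR (Expr.delta h) := by
  induction h with
  | rel | deltaRel | empty | atom => simp [Expr.denote, Expr.delta]
  | union e₁ e₂ ih₁ ih₂ =>
    simp only [Expr.denote, Expr.delta, ih₁, ih₂]
    abel
  | prod e₁ e₂ ih₁ ih₂ =>
    simp only [Expr.denote, Expr.delta, ih₁, ih₂, bagProd_add_left, bagProd_add_right]
    abel
  | forC e f ih ihf =>
    simp only [Expr.denote, Expr.delta, ih, ihf, bagBind_add_left, bagBind_add_right]
    abel
  | flatten e ih =>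
    simp only [Expr.denote, Expr.delta, ih]
    exact bagFlatten_add _ _
  | neg e ih =>
    simp only [Expr.denote, Expr.delta, ih, neg_add]
end

section
/- The cost-to-time function tcost is strictly monotone with respect to the strict order ≺ on cost domains of bag type: for cost values c₁ = n₁⟨x₁⟩ and c₂ = n₂⟨x₂⟩ in ⟦Bag(C)⟧, if c₁ ≺ c₂ then tcost(c₁) < tcost(c₂), where tcost_Base(c) = 1, tcost_{A₁×A₂}(⟨c₁,c₂⟩) = tcost(c₁) + tcost(c₂), and tcost_{Bag(C)}(n⟨c⟩) = n · tcost_C(c). -/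
/-- Nested relational types: `Base`, unit `1`, binary products and `Bag`. -/
inductive CTy : Type where
  | base : CTy
  | unit : CTy
  | prod (a b : CTy) : CTy
  | bag (c : CTy) : CTy

/-- Cost domains: `⟦Base⟧ = ⟦1⟧ = {1}` (one-point set), products are
componentwise, `⟦Bag C⟧ = ℕ⁺ × ⟦C⟧` (cardinality bound paired with an
element-cost bound). -/
def Cost : CTy → Type
  | .base => Unit
  | .unit => Unit
  | .prod a b => Cost a × Cost b
  | .bag c => ℕ+ × Cost c

/-- The non-strict order `⪯` on cost domains: always true on `Base` and `1`,
componentwise on products, and `n⟨x⟩ ⪯ m⟨y⟩ ↔ n ≤ m ∧ x ⪯ y` on bags. -/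
def sle : (t : CTy) → Cost t → Cost t → Prop
  | .base, _, _ => True
  | .unit, _, _ => True
  | .prod a b, x, y => sle a x.1 y.1 ∧ sle b x.2 y.2
  | .bag c, x, y => x.1 ≤ y.1 ∧ sle c x.2 y.2

/-- The strict order `≺` on cost domains: never on `Base` and `1`,
componentwise-strict on products, and `n⟨x⟩ ≺ m⟨y⟩ ↔ n < m ∧ x ⪯ y` on bags. -/
def slt : (t : CTy) → Cost t → Cost t → Prop
  | .base, _, _ => False
  | .unit, _, _ => False
  | .prod a b, x, y => slt a x.1 y.1 ∧ slt b x.2 y.2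
  | .bag c, x, y => x.1 < y.1 ∧ sle c x.2 y.2

/-- The cost-to-time function. -/
def tcost : (t : CTy) → Cost t → ℕ
  | .base, _ => 1
  | .unit, _ => 1
  | .prod a b, c => tcost a c.1 + tcost b c.2
  | .bag a, c => (c.1 : ℕ) * tcost a c.2


theorem tcost_pos : ∀ (t : CTy) (c : Cost t), 0 < tcost t c
  | .base, _ => one_pos
  | .unit, _ => one_pos
  | .prod a b, c => by simpa [tcost] using Or.inl (tcost_pos a c.1)
  | .bag a, c => by exact Nat.mul_pos c.1.pos (tcost_pos a c.2)

theorem tcost_mono : ∀ (t : CTy) (c₁ c₂ : Cost t), sle t c₁ c₂ → tcost t c₁ ≤ tcost t c₂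
  | .base, _, _, _ => le_refl _
  | .unit, _, _, _ => le_refl _
  | .prod a b, c₁, c₂, h => Nat.add_le_add (tcost_mono a _ _ h.1) (tcost_mono b _ _ h.2)
  | .bag a, c₁, c₂, h => Nat.mul_le_mul h.1 (tcost_mono a _ _ h.2)

/-- `tcost` is strictly monotone w.r.t. `≺` on cost domains of
bag type. -/
theorem tcost_strictMono (t : CTy) (c₁ c₂ : Cost (.bag t))
    (h : slt (.bag t) c₁ c₂) :
    tcost (.bag t) c₁ < tcost (.bag t) c₂ := by
  obtain ⟨hn, hx⟩ := h
  calc tcost (.bag t) c₁ = (c₁.1 : ℕ) * tcost t c₁.2 := rfl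
    _ < (c₂.1 : ℕ) * tcost t c₂.2 :=
      Nat.mul_lt_mul_of_lt_of_le (by exact_mod_cast hn) (tcost_mono t _ _ hx) (tcost_pos t _)
end

section
/- Incremental maintenance with two levels of deltas is correct for the self-product query: let h(R) = flatten(R) × flatten(R) for a bag of bags R. Define δh(R, ΔR) = flatten(R) × flatten(ΔR) ⊎ flatten(ΔR) × (flatten(R) ⊎ flatten(ΔR)) and δ²h(ΔR, Δ'R) = flatten(Δ'R) × flatten(ΔR) ⊎ flatten(ΔR) × flatten(Δ'R). Then (i) h(R ⊎ ΔR) = h(R) ⊎ δh(R, ΔR), and (ii) δh(R ⊎ Δ'R, ΔR) = δh(R, ΔR) ⊎ δ²h(ΔR, Δ'R); moreover δ²h does not depend on R. -/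
/-- The self-product query `h(R) = flatten(R) × flatten(R)`. -/
noncomputable def selfProd {B : Type*} (R : (B →₀ ℤ) →₀ ℤ) : B × B →₀ ℤ :=
  bagProd (bagFlatten R) (bagFlatten R)

/-- Its first-order delta
`δh(R, ΔR) = flatten(R) × flatten(ΔR) ⊎ flatten(ΔR) × (flatten(R) ⊎ flatten(ΔR))`. -/
noncomputable def deltaSelfProd {B : Type*} (R ΔR : (B →₀ ℤ) →₀ ℤ) : B × B →₀ ℤ :=
  bagProd (bagFlatten R) (bagFlatten ΔR) +
    bagProd (bagFlatten ΔR) (bagFlatten R + bagFlatten ΔR)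

/-- Its second-order delta
`δ²h(ΔR, Δ'R) = flatten(Δ'R) × flatten(ΔR) ⊎ flatten(ΔR) × flatten(Δ'R)`;
note that by construction it does not depend on `R`. -/
noncomputable def delta2SelfProd {B : Type*} (ΔR Δ'R : (B →₀ ℤ) →₀ ℤ) : B × B →₀ ℤ :=
  bagProd (bagFlatten Δ'R) (bagFlatten ΔR) +
    bagProd (bagFlatten ΔR) (bagFlatten Δ'R)

/-- incremental maintenance with two levels of deltas is
correct for the self-product query. -/
theorem selfProd_recursive_ivm {B : Type*} (R ΔR Δ'R : (B →₀ ℤ) →₀ ℤ) :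
    selfProd (R + ΔR) = selfProd R + deltaSelfProd R ΔR ∧
    deltaSelfProd (R + Δ'R) ΔR = deltaSelfProd R ΔR + delta2SelfProd ΔR Δ'R := by
  have hflat : ∀ X Y : (B →₀ ℤ) →₀ ℤ, bagFlatten (X + Y) = bagFlatten X + bagFlatten Y := by
    intro X Y
    unfold bagFlatten
    exact Finsupp.sum_add_index' (by simp) (fun v m n => add_smul m n v)
  constructor <;>
  · ext p
    simp only [selfProd, deltaSelfProd, delta2SelfProd, hflat, bagProd,
      Finsupp.onFinset_apply, Finsupp.add_apply]
    ring
end
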